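/- Let d ≥ 1, let ε : ℝ^d → ℝ be Lebesgue measurable, let η₀, η₁ ∈ ℝ, and define the weight w(p) = e^{η₀ + η₁ ε(p)} / (e^{η₀ + η₁ ε(p)} + 1)². Assume w, w·ε and w·ε² are Lebesgue integrable on ℝ^d and that ε is not Lebesgue-almost-everywhere equal to a constant. Then the 2×2 matrix J with entries J₁₁ = −∫ w dp, J₁₂ = J₂₁ = −∫ w·ε dp, J₂₂ = −∫ w·ε² dp is negative definite. (This is the Jacobian of the density–energy constraints with respect to the Lagrange multipliers (η₀, η₁).) -/

import Mathlib

open MeasureTheory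

/-! For `x = (a, b)` the quadratic form of `J` is `-∫ w (a + b ε)²`. Since `w > 0`, this integral
vanishes only if `a + b ε = 0` almost everywhere, which forces `b = 0` (as `ε` is not a.e.
constant) and then `a = 0`. -/

section WeightedSquare

variable {α : Type*} [MeasurableSpace α] {μ : Measure α} {w f : α → ℝ} (a b : ℝ)

lemma integrable_mul_affine_sq (hw : Integrable w μ) (hwf : Integrable (fun x => w x * f x) μ)
    (hwf2 : Integrable (fun x => w x * f x ^ 2) μ) :
    Integrable (fun x => w x * (a + b * f x) ^ 2) μ := by
  have h := ((hw.const_mul (a ^ 2)).add (hwf.const_mul (2 * a * b))).add (hwf2.const_mul (b ^ 2))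
  refine h.congr (ae_of_all _ fun x => ?_)
  simp only [Pi.add_apply]
  ring

lemma integral_mul_affine_sq (hw : Integrable w μ) (hwf : Integrable (fun x => w x * f x) μ)
    (hwf2 : Integrable (fun x => w x * f x ^ 2) μ) :
    ∫ x, w x * (a + b * f x) ^ 2 ∂μ =
      a ^ 2 * ∫ x, w x ∂μ + 2 * a * b * ∫ x, w x * f x ∂μ + b ^ 2 * ∫ x, w x * f x ^ 2 ∂μ := by
  have hexpand : (fun x => w x * (a + b * f x) ^ 2) =
      fun x => a ^ 2 * w x + 2 * a * b * (w x * f x) + b ^ 2 * (w x * f x ^ 2) := by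
    funext x
    ring
  have hfirst : Integrable (fun x => a ^ 2 * w x + 2 * a * b * (w x * f x)) μ :=
    (hw.const_mul _).add (hwf.const_mul _)
  rw [hexpand, integral_add hfirst (hwf2.const_mul _),
    integral_add (hw.const_mul _) (hwf.const_mul _), integral_const_mul, integral_const_mul,
    integral_const_mul]

lemma integral_mul_sq_pos {g : α → ℝ} (hw : ∀ᵐ x ∂μ, 0 < w x)
    (hint : Integrable (fun x => w x * g x ^ 2) μ) (hg : ¬ g =ᵐ[μ] 0) :
    0 < ∫ x, w x * g x ^ 2 ∂μ := by
  have hnonneg : 0 ≤ᵐ[μ] fun x => w x * g x ^ 2 :=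
    hw.mono fun x hx => mul_nonneg hx.le (sq_nonneg _)
  refine (integral_nonneg_of_ae hnonneg).lt_of_ne fun hzero => hg ?_
  filter_upwards [(integral_eq_zero_iff_of_nonneg_ae hnonneg hint).mp hzero.symm, hw]
    with x hx hwx
  simpa [hwx.ne'] using hx

lemma not_affine_ae_eq_zero [NeZero μ] (hf : ¬ ∃ c : ℝ, f =ᵐ[μ] fun _ => c)
    (hab : ¬ (a = 0 ∧ b = 0)) : ¬ (fun x => a + b * f x) =ᵐ[μ] 0 := by
  intro hzero
  by_cases hb : b = 0
  · have ha : ∀ᵐ _ ∂μ, a = 0 := hzero.mono fun x hx => by simpa [hb] using hx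
    obtain ⟨_, ha⟩ := ha.exists
    exact hab ⟨ha, hb⟩
  · refine hf ⟨-a / b, hzero.mono fun x hx => ?_⟩
    rw [eq_div_iff hb]
    simp only [Pi.zero_apply] at hx
    linarith

theorem integral_mul_affine_sq_pos [NeZero μ] (hw : ∀ᵐ x ∂μ, 0 < w x) (hwi : Integrable w μ)
    (hwf : Integrable (fun x => w x * f x) μ) (hwf2 : Integrable (fun x => w x * f x ^ 2) μ)
    (hf : ¬ ∃ c : ℝ, f =ᵐ[μ] fun _ => c) (hab : ¬ (a = 0 ∧ b = 0)) :
    0 < ∫ x, w x * (a + b * f x) ^ 2 ∂μ :=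
  integral_mul_sq_pos hw (integrable_mul_affine_sq a b hwi hwf hwf2)
    (not_affine_ae_eq_zero a b hf hab)

end WeightedSquare

theorem constraint_jacobian_negDef_general (d : ℕ)
    (ε : EuclideanSpace ℝ (Fin d) → ℝ) (η₀ η₁ : ℝ)
    (w : EuclideanSpace ℝ (Fin d) → ℝ)
    (hw : ∀ p, w p = Real.exp (η₀ + η₁ * ε p) / (Real.exp (η₀ + η₁ * ε p) + 1) ^ 2)
    (hw1 : Integrable w)
    (hw2 : Integrable (fun p => w p * ε p))
    (hw3 : Integrable (fun p => w p * ε p ^ 2))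
    (hεc : ¬ ∃ c : ℝ, ε =ᵐ[volume] fun _ => c)
    (J : Matrix (Fin 2) (Fin 2) ℝ)
    (hJ : J = !![-(∫ p, w p), -(∫ p, w p * ε p);
                 -(∫ p, w p * ε p), -(∫ p, w p * ε p ^ 2)]) :
    ∀ x : Fin 2 → ℝ, x ≠ 0 → ∑ i, ∑ j, x i * J i j * x j < 0 := by
  intro x hx
  have hwpos : ∀ᵐ p, 0 < w p := ae_of_all _ fun p => by rw [hw]; positivity
  have hx01 : ¬ (x 0 = 0 ∧ x 1 = 0) := fun h => hx <| by
    ext i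
    fin_cases i
    exacts [h.1, h.2]
  have hform : ∑ i, ∑ j, x i * J i j * x j = -∫ p, w p * (x 0 + x 1 * ε p) ^ 2 := by
    rw [integral_mul_affine_sq _ _ hw1 hw2 hw3]
    simp only [hJ, Fin.sum_univ_two, Matrix.of_apply, Matrix.cons_val', Matrix.cons_val_zero,
      Matrix.cons_val_one, Matrix.empty_val', Matrix.cons_val_fin_one]
    ring
  rw [hform, neg_lt_zero]
  exact integral_mul_affine_sq_pos _ _ hwpos hw1 hw2 hw3 hεc hx01

/-- The Jacobian of the density–energy constraints with respect to the Lagrange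
multipliers `(η₀, η₁)`, namely the 2×2 matrix with entries `−∫ w ε^{i+j} dp`
(`w = e^{η₀+η₁ε}/(e^{η₀+η₁ε}+1)²`), is negative definite provided the band `ε`
is not a.e. constant. -/
theorem constraint_jacobian_negDef (d : ℕ) (hd : 1 ≤ d)
    (ε : EuclideanSpace ℝ (Fin d) → ℝ) (hεm : Measurable ε) (η₀ η₁ : ℝ)
    (w : EuclideanSpace ℝ (Fin d) → ℝ)
    (hw : ∀ p, w p = Real.exp (η₀ + η₁ * ε p) / (Real.exp (η₀ + η₁ * ε p) + 1) ^ 2)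
    (hw1 : Integrable w)
    (hw2 : Integrable (fun p => w p * ε p))
    (hw3 : Integrable (fun p => w p * ε p ^ 2))
    (hεc : ¬ ∃ c : ℝ, ε =ᵐ[volume] fun _ => c)
    (J : Matrix (Fin 2) (Fin 2) ℝ)
    (hJ : J = !![-(∫ p, w p), -(∫ p, w p * ε p);
                 -(∫ p, w p * ε p), -(∫ p, w p * ε p ^ 2)]) :
    ∀ x : Fin 2 → ℝ, x ≠ 0 → ∑ i, ∑ j, x i * J i j * x j < 0 :=
  constraint_jacobian_negDef_general d ε η₀ η₁ w hw hw1 hw2 hw3 hεc J hJ
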